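/- The RPP-to-iso encoding is well-typed: for every f ∈ RPP^k, the translated iso isos(f) has type Z^k ↔ Z^k. -/

import Mathlib

namespace RPPx

/-- Recursive Primitive Permutations, inductively generated by arity. -/
inductive RPP : ℕ → Type
  | id : RPP 1
  | suc : RPP 1
  | pre : RPP 1
  | sign : RPP 1
  | swap : RPP 2
  | comp {k : ℕ} (f g : RPP k) : RPP k
  | par {k l : ℕ} (f : RPP k) (g : RPP l) : RPP (k + l)
  | it {k : ℕ} (f : RPP k) : RPP (k + 1)
  | ite {k : ℕ} (f g h : RPP k) : RPP (k + 1)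

/-- The semantics of an RPP function, as a map `ℤ^k → ℤ^k`. -/
def eval : ∀ {k : ℕ}, RPP k → (Fin k → ℤ) → (Fin k → ℤ)
  | _, .id => fun v => v
  | _, .suc => fun v i => v i + 1
  | _, .pre => fun v i => v i - 1
  | _, .sign => fun v i => -(v i)
  | _, .swap => fun v i => v i.rev
  | _, .comp f g => fun v => eval g (eval f v)
  | _, @RPP.par k l f g =>
      fun v => Fin.append (eval f (v ∘ Fin.castAdd l)) (eval g (v ∘ Fin.natAdd k))
  | _, @RPP.it k f =>
      fun v => Fin.snoc ((eval f)^[(v (Fin.last k)).natAbs] (Fin.init v)) (v (Fin.last k))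
  | _, @RPP.ite k f g h =>
      fun v => Fin.snoc
        ((if 0 < v (Fin.last k) then eval f
          else if v (Fin.last k) = 0 then eval g else eval h) (Fin.init v))
        (v (Fin.last k))

/-- The structurally defined inverse of an RPP function. -/
def inv : ∀ {k : ℕ}, RPP k → RPP k
  | _, .id => .id
  | _, .suc => .pre
  | _, .pre => .suc
  | _, .sign => .sign
  | _, .swap => .swap
  | _, .comp f g => .comp (inv g) (inv f)
  | _, .par f g => .par (inv f) (inv g)
  | _, .it f => .it (inv f)
  | _, .ite f g h => .ite (inv f) (inv g) (inv h)

end RPPx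

namespace LinRev

/-! ## Types of the linear reversible language:  A ::= 1 | A⊕B | A⊗B | μX.A | X  -/

inductive Ty : Type
  | one : Ty
  | sum : Ty → Ty → Ty
  | prod : Ty → Ty → Ty
  | mu : Ty → Ty
  | tvar : ℕ → Ty
  deriving DecidableEq

/-- Substitute type `T` for the (de Bruijn) type variable `n` in a type. -/
def Ty.substF : Ty → ℕ → Ty → Ty
  | .one, _, _ => .one
  | .sum A B, n, T => .sum (A.substF n T) (B.substF n T)
  | .prod A B, n, T => .prod (A.substF n T) (B.substF n T)
  | .mu A, n, T => .mu (A.substF (n + 1) T)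
  | .tvar m, n, T => if m = n then T else .tvar m

/-- `A[X ← μX.A]`, the one-step unfolding of `μX.A` with body `A`. -/
def Ty.unfold (A : Ty) : Ty := A.substF 0 (.mu A)

/-! ## Values:  v ::= () | x | inl v | inr v | ⟨v,v⟩ | fold v  -/

inductive Val : Type
  | unit : Val
  | var : ℕ → Val
  | inl : Val → Val
  | inr : Val → Val
  | pair : Val → Val → Val
  | fold : Val → Val
  deriving DecidableEq

/-- Free variables of a value. -/
def Val.fv : Val → Finset ℕ
  | .unit => ∅
  | .var x => {x}
  | .inl v => v.fv
  | .inr v => v.fv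
  | .pair v w => v.fv ∪ w.fv
  | .fold v => v.fv

/-! ## Substitutions -/

/-- A substitution: a partial map from variables to values. -/
abbrev Sub := ℕ → Option Val

/-- The support of a substitution. -/
def Sub.supp (σ : Sub) : Set ℕ := {x | σ x ≠ none}

/-- Disjointness of supports. -/
def Sub.disj (σ₁ σ₂ : Sub) : Prop := ∀ x, σ₁ x = none ∨ σ₂ x = none

/-- Union of two substitutions. -/
def Sub.union (σ₁ σ₂ : Sub) : Sub := fun x => (σ₁ x).orElse (fun _ => σ₂ x)

/-- Applying a substitution to a value. -/
def Val.applySub (σ : Sub) : Val → Val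
  | .unit => .unit
  | .var x => (σ x).getD (.var x)
  | .inl v => .inl (v.applySub σ)
  | .inr v => .inr (v.applySub σ)
  | .pair v w => .pair (v.applySub σ) (w.applySub σ)
  | .fold v => .fold (v.applySub σ)

/-- The pattern-matching judgment `σ[p] = v`. -/
inductive Matches : Sub → Val → Val → Prop
  | unit : Matches (fun _ => none) .unit .unit
  | var (x : ℕ) (v : Val) :
      Matches (fun y => if y = x then some v else none) (.var x) v
  | inl {σ p v} : Matches σ p v → Matches σ (.inl p) (.inl v)
  | inr {σ p v} : Matches σ p v → Matches σ (.inr p) (.inr v)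
  | fold {σ p v} : Matches σ p v → Matches σ (.fold p) (.fold v)
  | pair {σ₁ σ₂ p₁ p₂ v₁ v₂} :
      Matches σ₁ p₁ v₁ → Matches σ₂ p₂ v₂ → Sub.disj σ₁ σ₂ →
      Matches (σ₁.union σ₂) (.pair p₁ p₂) (.pair v₁ v₂)

/-! ## The exhaustivity/non-overlapping predicate `OD_A(S)` -/

def proj1 (S : Set Val) : Set Val := {v | ∃ w, Val.pair v w ∈ S}
def proj2 (S : Set Val) : Set Val := {w | ∃ v, Val.pair v w ∈ S}
def sect1 (S : Set Val) (v : Val) : Set Val := {w | Val.pair v w ∈ S}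
def sect2 (S : Set Val) (w : Val) : Set Val := {v | Val.pair v w ∈ S}

inductive OD : Ty → Set Val → Prop
  | var (A : Ty) (x : ℕ) : OD A {Val.var x}
  | unit : OD .one {Val.unit}
  | sum {A B : Ty} {S T : Set Val} :
      OD A S → OD B T → OD (.sum A B) (Val.inl '' S ∪ Val.inr '' T)
  | mu {A : Ty} {S : Set Val} :
      OD A.unfold S → OD (.mu A) (Val.fold '' S)
  | prodL {A B : Ty} {S : Set Val} :
      (∀ u ∈ S, ∃ v w, u = Val.pair v w) →
      OD A (proj1 S) → (∀ v ∈ proj1 S, OD B (sect1 S v)) →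
      OD (.prod A B) S
  | prodR {A B : Ty} {S : Set Val} :
      (∀ u ∈ S, ∃ v w, u = Val.pair v w) →
      OD B (proj2 S) → (∀ w ∈ proj2 S, OD A (sect2 S w)) →
      OD (.prod A B) S

/-! ## Linear typing contexts (variables, at most one occurrence each) -/

abbrev Ctx := ℕ → Option Ty

def Ctx.empty : Ctx := fun _ => none
def Ctx.single (x : ℕ) (A : Ty) : Ctx := fun y => if y = x then some A else none
def Ctx.disj (Γ Δ : Ctx) : Prop := ∀ x, Γ x = none ∨ Δ x = none
def Ctx.union (Γ Δ : Ctx) : Ctx := fun x => (Γ x).orElse (fun _ => Δ x)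
def Ctx.unions (L : List Ctx) : Ctx := L.foldr Ctx.union Ctx.empty

/-- Linear typing of values: `Δ ⊢ v : A`. -/
inductive VTy : Ctx → Val → Ty → Prop
  | unit : VTy Ctx.empty .unit .one
  | var (x : ℕ) (A : Ty) : VTy (Ctx.single x A) (.var x) A
  | inl {Γ v A B} : VTy Γ v A → VTy Γ (.inl v) (.sum A B)
  | inr {Γ v A B} : VTy Γ v B → VTy Γ (.inr v) (.sum A B)
  | fold {Γ v A} : VTy Γ v A.unfold → VTy Γ (.fold v) (.mu A)
  | pair {Γ Δ v w A B} :
      VTy Γ v A → VTy Δ w B → Ctx.disj Γ Δ →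
      VTy (Γ.union Δ) (.pair v w) (.prod A B)

end LinRev
namespace LinRev

/-! ## Patterns, terms, isos -/

inductive Pat : Type
  | pvar : ℕ → Pat
  | ppair : Pat → Pat → Pat
  deriving DecidableEq

def Pat.toVal : Pat → Val
  | .pvar x => .var x
  | .ppair p q => .pair p.toVal q.toVal

def Pat.vars : Pat → Finset ℕ
  | .pvar x => {x}
  | .ppair p q => p.vars ∪ q.vars

mutual
  inductive Term : Type
    | unit : Term
    | var : ℕ → Term
    | inl : Term → Term
    | inr : Term → Term
    | pair : Term → Term → Term
    | fold : Term → Term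
    | app : Iso → Term → Term
    | lett : Pat → Term → Term → Term

  inductive Iso : Type
    | clauses : Clauses → Iso
    | fixI : ℕ → Iso → Iso
    | ivar : ℕ → Iso

  inductive Clauses : Type
    | nil : Clauses
    | cons : Val → Term → Clauses → Clauses
end

def Clauses.toList : Clauses → List (Val × Term)
  | .nil => []
  | .cons v e r => (v, e) :: r.toList

def Val.toTerm : Val → Term
  | .unit => .unit
  | .var x => .var x
  | .inl v => .inl v.toTerm
  | .inr v => .inr v.toTerm
  | .pair v w => .pair v.toTerm w.toTerm
  | .fold v => .fold v.toTerm

def Pat.toTerm (p : Pat) : Term := p.toVal.toTerm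

def Term.asVal : Term → Option Val
  | .unit => some .unit
  | .var x => some (.var x)
  | .inl t => t.asVal.map .inl
  | .inr t => t.asVal.map .inr
  | .pair a b =>
      match a.asVal, b.asVal with
      | some v, some w => some (.pair v w)
      | _, _ => none
  | .fold t => t.asVal.map .fold
  | _ => none

def Term.asPat : Term → Option Pat
  | .var x => some (.pvar x)
  | .pair a b =>
      match a.asPat, b.asPat with
      | some p, some q => some (.ppair p q)
      | _, _ => none
  | _ => none

/-- `Val(e)`: the value at the end of a chain of lets. -/
def Term.valOf : Term → Option Val
  | .lett _ _ t₂ => t₂.valOf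
  | t => t.asVal

/-- Free (term) variables of a term. -/
def Term.fvT : Term → Finset ℕ
  | .unit => ∅
  | .var x => {x}
  | .inl t => t.fvT
  | .inr t => t.fvT
  | .fold t => t.fvT
  | .pair a b => a.fvT ∪ b.fvT
  | .app _ t => t.fvT
  | .lett p a b => a.fvT ∪ (b.fvT \ p.vars)

/-- Applying a (value) substitution to a term. -/
def Term.applySub (σ : Sub) : Term → Term
  | .unit => .unit
  | .var x => ((σ x).map Val.toTerm).getD (.var x)
  | .inl t => .inl (t.applySub σ)
  | .inr t => .inr (t.applySub σ)
  | .pair a b => .pair (a.applySub σ) (b.applySub σ)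
  | .fold t => .fold (t.applySub σ)
  | .app ω t => .app ω (t.applySub σ)
  | .lett p a b => .lett p (a.applySub σ) (b.applySub σ)

/-! ## Substitution of iso-variables -/

mutual
  def Term.isoSub (f : ℕ) (w : Iso) : Term → Term
    | .unit => .unit
    | .var x => .var x
    | .inl t => .inl (Term.isoSub f w t)
    | .inr t => .inr (Term.isoSub f w t)
    | .pair a b => .pair (Term.isoSub f w a) (Term.isoSub f w b)
    | .fold t => .fold (Term.isoSub f w t)
    | .app ω t => .app (Iso.isoSub f w ω) (Term.isoSub f w t)
    | .lett p a b => .lett p (Term.isoSub f w a) (Term.isoSub f w b)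
  termination_by t => sizeOf t

  def Iso.isoSub (f : ℕ) (w : Iso) : Iso → Iso
    | .ivar g => if g = f then w else .ivar g
    | .fixI g ω => if g = f then .fixI g ω else .fixI g (Iso.isoSub f w ω)
    | .clauses l => .clauses (Clauses.isoSub f w l)
  termination_by ω => sizeOf ω

  def Clauses.isoSub (f : ℕ) (w : Iso) : Clauses → Clauses
    | .nil => .nil
    | .cons v e r => .cons v (Term.isoSub f w e) (Clauses.isoSub f w r)
  termination_by l => sizeOf l
end

/-! ## Inversion of isos -/

mutual
  /-- The dual iso `ω⊥`. -/
  def Iso.inv : Iso → Iso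
    | .ivar f => .ivar f
    | .fixI f ω => .fixI f ω.inv
    | .clauses l => .clauses l.inv
  termination_by ω => sizeOf ω

  def Clauses.inv : Clauses → Clauses
    | .nil => .nil
    | .cons v e r =>
        match invAux (Val.toTerm v) e with
        | some (v', e') => .cons v' e' r.inv
        | none => .cons v e r.inv
  termination_by l => sizeOf l

  /-- Invert a clause body `let p₁ = ω₁ p₁' in … let pₙ = ωₙ pₙ' in v'`,
  reversing the lets and inverting each sub-iso; `acc` accumulates the result. -/
  def invAux : Term → Term → Option (Val × Term)
    | acc, .lett p (.app ω t) e =>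
        match t.asPat with
        | some p' => invAux (.lett p' (.app ω.inv p.toTerm) acc) e
        | none => none
    | acc, t => t.asVal.map (fun v' => (v', acc))
  termination_by _ e => sizeOf e
end

end LinRev
namespace LinRev

/-! ## Operational semantics (deterministic call-by-value) -/

inductive Step : Term → Term → Prop
  | inlC {t t'} : Step t t' → Step (.inl t) (.inl t')
  | inrC {t t'} : Step t t' → Step (.inr t) (.inr t')
  | foldC {t t'} : Step t t' → Step (.fold t) (.fold t')
  | pairL {t t'} (v : Val) : Step t t' → Step (.pair t v.toTerm) (.pair t' v.toTerm)
  | pairR {t t'} (v : Val) : Step t t' → Step (.pair v.toTerm t) (.pair v.toTerm t')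
  | appC {ω t t'} : Step t t' → Step (.app ω t) (.app ω t')
  | lettC {p t₁ t₁' t₂} : Step t₁ t₁' → Step (.lett p t₁ t₂) (.lett p t₁' t₂)
  | isoRec {f ω t} :
      Step (.app (.fixI f ω) t) (.app (Iso.isoSub f (.fixI f ω) ω) t)
  | lettE {σ : Sub} {p : Pat} {v : Val} {t : Term} :
      Matches σ p.toVal v → Step (.lett p v.toTerm t) (t.applySub σ)
  | isoApp {σ : Sub} {l : Clauses} {vi : Val} {e : Term} {v : Val} :
      (vi, e) ∈ l.toList → Matches σ vi v →
      Step (.app (.clauses l) v.toTerm) (e.applySub σ)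

/-- Reflexive-transitive closure `→*`. -/
def Steps : Term → Term → Prop := Relation.ReflTransGen Step

/-! ## Structural recursion criterion -/

/-- Flatten a right-nested tensor type into its components. -/
def Ty.tuple : Ty → List Ty
  | .prod A B => A :: B.tuple
  | A => [A]

/-- Flatten a right-nested pair value into its components. -/
def Val.tuple : Val → List Val
  | .pair a b => a :: b.tuple
  | v => [v]

/-- If a term is a tuple of variables `(x₁, …, xₘ)`, return the variables. -/
def Term.tupleVars : Term → Option (List ℕ)
  | .var x => some [x]
  | .pair (.var x) t => t.tupleVars.map (x :: ·)
  | _ => none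

/-- Subterm relation on values. -/
inductive Val.SubV : Val → Val → Prop
  | refl (v : Val) : Val.SubV v v
  | inl {u v} : Val.SubV u v → Val.SubV u (.inl v)
  | inr {u v} : Val.SubV u v → Val.SubV u (.inr v)
  | fold {u v} : Val.SubV u v → Val.SubV u (.fold v)
  | pairL {u v w} : Val.SubV u v → Val.SubV u (.pair v w)
  | pairR {u v w} : Val.SubV u w → Val.SubV u (.pair v w)

/- `RecCallT f p t` : the recursive call `f p` occurs as a subterm of `t`. -/
mutual
  inductive RecCallT : ℕ → Term → Term → Prop
    | here (f : ℕ) (p : Term) : RecCallT f p (.app (.ivar f) p)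
    | inl {f p t} : RecCallT f p t → RecCallT f p (.inl t)
    | inr {f p t} : RecCallT f p t → RecCallT f p (.inr t)
    | fold {f p t} : RecCallT f p t → RecCallT f p (.fold t)
    | pairL {f p t₁ t₂} : RecCallT f p t₁ → RecCallT f p (.pair t₁ t₂)
    | pairR {f p t₁ t₂} : RecCallT f p t₂ → RecCallT f p (.pair t₁ t₂)
    | appIso {f p ω t} : RecCallI f p ω → RecCallT f p (.app ω t)
    | appArg {f p ω t} : RecCallT f p t → RecCallT f p (.app ω t)
    | lett₁ {f p q t₁ t₂} : RecCallT f p t₁ → RecCallT f p (.lett q t₁ t₂)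
    | lett₂ {f p q t₁ t₂} : RecCallT f p t₂ → RecCallT f p (.lett q t₁ t₂)

  inductive RecCallI : ℕ → Term → Iso → Prop
    | clauses {f p l} : RecCallC f p l → RecCallI f p (.clauses l)
    | fixI {f g p ω} : RecCallI f p ω → g ≠ f → RecCallI f p (.fixI g ω)

  inductive RecCallC : ℕ → Term → Clauses → Prop
    | head {f p v e r} : RecCallT f p e → RecCallC f p (.cons v e r)
    | tail {f p v e r} : RecCallC f p r → RecCallC f p (.cons v e r)
end

/-- The structural recursion criterion for `fix f. {vᵢ ↔ eᵢ} : A ↔ C`: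
some component `Aⱼ = μX.B` of the input type is such that in every clause,
if the `j`-th component of the pattern is closed there is no recursive call,
and otherwise every recursive call `f p` has `p` a tuple of variables whose
`j`-th component is a strict subterm of the `j`-th pattern component. -/
def StructRecClauses (f : ℕ) (l : Clauses) (A : Ty) : Prop :=
  ∃ (j : ℕ) (B : Ty), A.tuple[j]? = some (Ty.mu B) ∧
    ∀ c ∈ l.toList, ∃ vj, (Val.tuple c.1)[j]? = some vj ∧
      ((vj.fv = ∅ ∧ ∀ p, ¬ RecCallT f p c.2) ∨
       (∀ p, RecCallT f p c.2 → ∃ xs : List ℕ,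
          p.tupleVars = some xs ∧ xs.length = A.tuple.length ∧
          ∃ x, xs[j]? = some x ∧ Val.SubV (.var x) vj ∧ Val.var x ≠ vj))

/-! ## Typing of terms and isos -/

/-- An iso-variable context: at most one iso-variable `f : A ↔ B`. -/
abbrev IsoCtx := Option (ℕ × Ty × Ty)

/-- Typing of let-patterns, producing the context of bound variables. -/
inductive PatTy : Pat → Ty → Ctx → Prop
  | pvar (x : ℕ) (A : Ty) : PatTy (.pvar x) A (Ctx.single x A)
  | ppair {p q A B Γ Δ} :
      PatTy p A Γ → PatTy q B Δ → Ctx.disj Γ Δ →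
      PatTy (.ppair p q) (.prod A B) (Γ.union Δ)

mutual
  /-- Typing of terms: `Δ; Ψ ⊢ t : A`. -/
  inductive TermTy : Ctx → IsoCtx → Term → Ty → Prop
    | unit (Ψ : IsoCtx) : TermTy Ctx.empty Ψ .unit .one
    | var (x : ℕ) (A : Ty) (Ψ : IsoCtx) : TermTy (Ctx.single x A) Ψ (.var x) A
    | inl {Γ Ψ t A B} : TermTy Γ Ψ t A → TermTy Γ Ψ (.inl t) (.sum A B)
    | inr {Γ Ψ t A B} : TermTy Γ Ψ t B → TermTy Γ Ψ (.inr t) (.sum A B)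
    | fold {Γ Ψ t A} : TermTy Γ Ψ t A.unfold → TermTy Γ Ψ (.fold t) (.mu A)
    | pair {Γ Δ Ψ t₁ t₂ A B} :
        TermTy Γ Ψ t₁ A → TermTy Δ Ψ t₂ B → Ctx.disj Γ Δ →
        TermTy (Γ.union Δ) Ψ (.pair t₁ t₂) (.prod A B)
    | appV {Γ Ψ ω t A B} :
        IsoTy Ψ ω A B → TermTy Γ Ψ t A → TermTy Γ Ψ (.app ω t) B
    | appC {Γ Ψ ω t A B} :
        IsoTy none ω A B → TermTy Γ Ψ t A → TermTy Γ Ψ (.app ω t) B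
    | lett {Γ Δ Ξ Ψ p t₁ t₂ A B} :
        TermTy Γ Ψ t₁ A → PatTy p A Ξ → TermTy (Δ.union Ξ) Ψ t₂ B →
        Ctx.disj Γ Δ → Ctx.disj Δ Ξ →
        TermTy (Γ.union Δ) Ψ (.lett p t₁ t₂) B

  /-- Typing of isos: `Ψ ⊢ ω : A ↔ B`. -/
  inductive IsoTy : IsoCtx → Iso → Ty → Ty → Prop
    | ivar (f : ℕ) (A B : Ty) : IsoTy (some (f, A, B)) (.ivar f) A B
    | fixI {f ω A B} (Ψ : IsoCtx) :
        IsoTy (some (f, A, B)) ω A B →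
        (∀ l, ω = .clauses l → StructRecClauses f l A) →
        IsoTy Ψ (.fixI f ω) A B
    | clauses {Ψ l A B} (Γof : Val × Term → Ctx) :
        (∀ c ∈ Clauses.toList l, VTy (Γof c) c.1 A) →
        (∀ c ∈ Clauses.toList l, TermTy (Γof c) Ψ c.2 B) →
        OD A {v | ∃ e, (v, e) ∈ Clauses.toList l} →
        OD B {w | ∃ c ∈ Clauses.toList l, Term.valOf c.2 = some w} →
        IsoTy Ψ (.clauses l) A B
end

/-! ## Explicit substitutions -/

/-- The substitution determined by an association list. -/
def Sub.ofList (L : List (ℕ × Val)) : Sub :=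
  fun x => (L.find? (fun p => p.1 = x)).map Prod.snd

/-- `let σ in t` : a nested sequence of lets, one per binding. -/
def letSig (L : List (ℕ × Val)) (t : Term) : Term :=
  L.foldr (fun xv acc => .lett (.pvar xv.1) xv.2.toTerm acc) t

/-- The explicit let-propagation rules `→ₑₗₑₜ`. -/
inductive ELet : Term → Term → Prop
  | letvar {x : ℕ} {v : Val} : ELet (.lett (.pvar x) v.toTerm (.var x)) v.toTerm
  | letpair {x : ℕ} {p : Pat} {t₁ t₂ t : Term} :
      ELet (.lett (.ppair (.pvar x) p) (.pair t₁ t₂) t)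
           (.lett (.pvar x) t₁ (.lett p t₂ t))
  | pairL {x : ℕ} {v : Val} {t₁ t₂ : Term} : x ∈ t₁.fvT →
      ELet (.lett (.pvar x) v.toTerm (.pair t₁ t₂))
           (.pair (.lett (.pvar x) v.toTerm t₁) t₂)
  | pairR {x : ℕ} {v : Val} {t₁ t₂ : Term} : x ∈ t₂.fvT →
      ELet (.lett (.pvar x) v.toTerm (.pair t₁ t₂))
           (.pair t₁ (.lett (.pvar x) v.toTerm t₂))
  | inl {x : ℕ} {v : Val} {t : Term} :
      ELet (.lett (.pvar x) v.toTerm (.inl t)) (.inl (.lett (.pvar x) v.toTerm t))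
  | inr {x : ℕ} {v : Val} {t : Term} :
      ELet (.lett (.pvar x) v.toTerm (.inr t)) (.inr (.lett (.pvar x) v.toTerm t))
  | fold {x : ℕ} {v : Val} {t : Term} :
      ELet (.lett (.pvar x) v.toTerm (.fold t)) (.fold (.lett (.pvar x) v.toTerm t))
  | app {x : ℕ} {v : Val} {ω : Iso} {t : Term} :
      ELet (.lett (.pvar x) v.toTerm (.app ω t)) (.app ω (.lett (.pvar x) v.toTerm t))

/-- The explicit-substitution reduction `→_{eβ}`. -/
inductive EBeta : Term → Term → Prop
  | elet {t t'} : ELet t t' → EBeta t t'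
  | inlC {t t'} : EBeta t t' → EBeta (.inl t) (.inl t')
  | inrC {t t'} : EBeta t t' → EBeta (.inr t) (.inr t')
  | foldC {t t'} : EBeta t t' → EBeta (.fold t) (.fold t')
  | pairL {t t'} (v : Val) : EBeta t t' → EBeta (.pair t v.toTerm) (.pair t' v.toTerm)
  | pairR {t t'} (v : Val) : EBeta t t' → EBeta (.pair v.toTerm t) (.pair v.toTerm t')
  | appC {ω t t'} : EBeta t t' → EBeta (.app ω t) (.app ω t')
  | lettC {p t₁ t₁' t₂} : EBeta t₁ t₁' → EBeta (.lett p t₁ t₂) (.lett p t₁' t₂)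
  | isoRec {f ω t} :
      EBeta (.app (.fixI f ω) t) (.app (Iso.isoSub f (.fixI f ω) ω) t)
  | lettE {L : List (ℕ × Val)} {p : Pat} {v : Val} {t : Term} :
      Matches (Sub.ofList L) p.toVal v → EBeta (.lett p v.toTerm t) (letSig L t)
  | isoApp {L : List (ℕ × Val)} {l : Clauses} {vi : Val} {e : Term} {v : Val} :
      (vi, e) ∈ l.toList → Matches (Sub.ofList L) vi v →
      EBeta (.app (.clauses l) v.toTerm) (letSig L e)

end LinRev
namespace LinRev

/-! ## Encoding of integers -/

/-- `npos = μX. 1 ⊕ X`, the type of strictly positive naturals. -/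
def nposTy : Ty := .mu (.sum .one (.tvar 0))

/-- `Z = 1 ⊕ (npos ⊕ npos)`, the type of integers. -/
def ZTy : Ty := .sum .one (.sum nposTy nposTy)

/-- `enpos n` encodes the strictly positive natural `n+1 : npos`. -/
def enpos : ℕ → Val
  | 0 => .fold (.inl .unit)
  | n + 1 => .fold (.inr (enpos n))

/-- `encZ z` encodes the integer `z : Z`. -/
def encZ (z : ℤ) : Val :=
  if 0 < z then .inr (.inl (enpos (z.natAbs - 1)))
  else if z = 0 then .inl .unit
  else .inr (.inr (enpos (z.natAbs - 1)))

/-- The successor iso on encoded integers. -/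
def succIso : Iso := .clauses
  (.cons (.inl .unit) ((Val.inr (.inl (.fold (.inl .unit)))).toTerm)
  (.cons (.inr (.inl (.var 0))) ((Val.inr (.inl (.fold (.inr (.var 0))))).toTerm)
  (.cons (.inr (.inr (.fold (.inl .unit)))) ((Val.inl .unit).toTerm)
  (.cons (.inr (.inr (.fold (.inr (.var 0))))) ((Val.inr (.inr (.var 0))).toTerm)
   .nil))))

end LinRev
namespace LinRev

/-! ## Translation of RPP into isos -/

/-- Right-nested tuple of values. -/
def tupleV : List Val → Val
  | [] => .unit
  | [v] => v
  | v :: vs => .pair v (tupleV vs)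

/-- Right-nested tuple of types. -/
def tupleTy : List Ty → Ty
  | [] => .one
  | [A] => A
  | A :: As => .prod A (tupleTy As)

/-- Right-nested tuple pattern of variables. -/
def patOfVars : List ℕ → Pat
  | [] => .pvar 0
  | [x] => .pvar x
  | x :: xs => .ppair (.pvar x) (patOfVars xs)

/-- `Z^k`. -/
def Zpow (k : ℕ) : Ty := tupleTy (List.replicate k ZTy)

/-- Tuple of variables `s, …, s+c-1`. -/
def vt (s c : ℕ) : Val := tupleV ((List.range' s c).map .var)

def pt' (s c : ℕ) : Pat := patOfVars (List.range' s c)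

def idIso : Iso := .clauses (.cons (.var 0) (Term.var 0) .nil)

def swapIso : Iso :=
  .clauses (.cons (.pair (.var 0) (.var 1)) ((Val.pair (.var 1) (.var 0)).toTerm) .nil)

def signIso : Iso := .clauses
  (.cons (.inr (.inl (.var 0))) ((Val.inr (.inr (.var 0))).toTerm)
  (.cons (.inr (.inr (.var 0))) ((Val.inr (.inl (.var 0))).toTerm)
  (.cons (.inl .unit) ((Val.inl .unit).toTerm) .nil)))

/-- Encoding of sequential composition `f ; g` at arity `n`. -/
def compIso (n : ℕ) (wf wg : Iso) : Iso :=
  .clauses (.cons (vt 0 n)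
    (.lett (pt' n n) (.app wf (vt 0 n).toTerm)
      (.lett (pt' (2 * n) n) (.app wg (vt n n).toTerm)
        (vt (2 * n) n).toTerm)) .nil)

/-- Encoding of parallel composition `f ∥ g` at arities `j` and `l`. -/
def parIso (j l : ℕ) (wf wg : Iso) : Iso :=
  .clauses (.cons (vt 0 (j + l))
    (.lett (patOfVars (List.range' (j + l) j)) (.app wf (vt 0 j).toTerm)
      (.lett (patOfVars (List.range' (2 * j + l) l)) (.app wg (vt j l).toTerm)
        (tupleV (((List.range' (j + l) j ++ List.range' (2 * j + l) l)).map .var)).toTerm))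
    .nil)

/-- The auxiliary, structurally recursive iterating iso
`ω_aux : Z^k ⊗ npos ↔ Z^k ⊗ npos`. -/
def auxIt (k : ℕ) (wf : Iso) : Iso :=
  .fixI 0 (.clauses
    (.cons (tupleV (((List.range' 0 k).map Val.var) ++ [.fold (.inl .unit)]))
      (.lett (pt' k k) (.app wf (vt 0 k).toTerm)
        (tupleV (((List.range' k k).map Val.var) ++ [Val.fold (.inl .unit)])).toTerm)
    (.cons (tupleV (((List.range' 0 k).map Val.var) ++ [.fold (.inr (.var k))]))
      (.lett (pt' (k + 1) k) (.app wf (vt 0 k).toTerm)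
        (.lett (patOfVars (List.range' (2 * k + 1) k ++ [3 * k + 1]))
          (.app (.ivar 0)
            (tupleV (((List.range' (k + 1) k).map Val.var) ++ [Val.var k])).toTerm)
          (tupleV (((List.range' (2 * k + 1) k).map Val.var)
              ++ [Val.fold (.inr (.var (3 * k + 1)))])).toTerm))
      .nil)))

/-- Encoding of the finite iteration `It[f]`. -/
def itIso (k : ℕ) (wf : Iso) : Iso :=
  .clauses
    (.cons (tupleV (((List.range' 0 k).map Val.var) ++ [.inl .unit]))
      (tupleV (((List.range' 0 k).map Val.var) ++ [Val.inl .unit])).toTerm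
    (.cons (tupleV (((List.range' 0 k).map Val.var) ++ [.inr (.inl (.var k))]))
      (.lett (patOfVars (List.range' (k + 1) k ++ [2 * k + 1]))
        (.app (auxIt k wf) (tupleV (((List.range' 0 k).map Val.var) ++ [Val.var k])).toTerm)
        (tupleV (((List.range' (k + 1) k).map Val.var)
            ++ [Val.inr (.inl (.var (2 * k + 1)))])).toTerm)
    (.cons (tupleV (((List.range' 0 k).map Val.var) ++ [.inr (.inr (.var k))]))
      (.lett (patOfVars (List.range' (k + 1) k ++ [2 * k + 1]))
        (.app (auxIt k wf) (tupleV (((List.range' 0 k).map Val.var) ++ [Val.var k])).toTerm)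
        (tupleV (((List.range' (k + 1) k).map Val.var)
            ++ [Val.inr (.inr (.var (2 * k + 1)))])).toTerm)
      .nil)))

/-- Encoding of the selection `If[f,g,h]`. -/
def ifIso (k : ℕ) (wf wg wh : Iso) : Iso :=
  .clauses
    (.cons (tupleV (((List.range' 0 k).map Val.var) ++ [.inr (.inl (.var k))]))
      (.lett (pt' (k + 1) k) (.app wf (vt 0 k).toTerm)
        (tupleV (((List.range' (k + 1) k).map Val.var)
            ++ [Val.inr (.inl (.var k))])).toTerm)
    (.cons (tupleV (((List.range' 0 k).map Val.var) ++ [.inl .unit]))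
      (.lett (pt' (k + 1) k) (.app wg (vt 0 k).toTerm)
        (tupleV (((List.range' (k + 1) k).map Val.var) ++ [Val.inl .unit])).toTerm)
    (.cons (tupleV (((List.range' 0 k).map Val.var) ++ [.inr (.inr (.var k))]))
      (.lett (pt' (k + 1) k) (.app wh (vt 0 k).toTerm)
        (tupleV (((List.range' (k + 1) k).map Val.var)
            ++ [Val.inr (.inr (.var k))])).toTerm)
      .nil)))

/-- The translation `isos(·)` from RPP to isos of the reversible language. -/
def isosOf : ∀ {k : ℕ}, RPPx.RPP k → Iso
  | _, .id => idIso
  | _, .suc => succIso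
  | _, .pre => succIso.inv
  | _, .sign => signIso
  | _, .swap => swapIso
  | k, .comp f g => compIso k (isosOf f) (isosOf g)
  | _, @RPPx.RPP.par j l f g => parIso j l (isosOf f) (isosOf g)
  | _, @RPPx.RPP.it k f => itIso k (isosOf f)
  | _, @RPPx.RPP.ite k f g h => ifIso k (isosOf f) (isosOf g) (isosOf h)

/-- Encoding of a tuple of integers. -/
def encTup {k : ℕ} (v : Fin k → ℤ) : Val :=
  tupleV (List.ofFn fun i => encZ (v i))

end LinRev

namespace LinRev

/-! The left- and right-hand sides of every clause set produced by the translation are tuples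
of variables whose last component may be a case split of a `Z` or `npos` value. For such sets the
exhaustivity/non-overlap predicate follows by peeling off the leading variables with `OD.prodR`:
distinct clauses differ in their last component, which then determines the variables in front of
it. The clause bodies are typed by linear bookkeeping on disjoint ranges of variables. The only
recursive iso, the auxiliary iso of the iteration, calls itself on the predecessor of its `npos`
argument, and a closed well-typed iso contains no call to an iso-variable, so the structural
recursion criterion holds. -/

/-! ## Linear contexts -/

namespace Ctx

@[simp] theorem union_apply (Γ Δ : Ctx) (x : ℕ) :
    Γ.union Δ x = (Γ x).orElse fun _ => Δ x := rfl

@[simp] theorem single_apply (x y : ℕ) (A : Ty) :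
    Ctx.single x A y = if y = x then some A else none := rfl

@[simp] theorem union_empty (Γ : Ctx) : Γ.union Ctx.empty = Γ := by
  funext x; simp only [union_apply]; cases Γ x <;> rfl

@[simp] theorem empty_union (Γ : Ctx) : Ctx.empty.union Γ = Γ := rfl

theorem union_assoc (Γ Δ Ξ : Ctx) : (Γ.union Δ).union Ξ = Γ.union (Δ.union Ξ) := by
  funext x; simp only [union_apply]; cases Γ x <;> rfl

theorem union_comm_of_disj {Γ Δ : Ctx} (h : Γ.disj Δ) : Γ.union Δ = Δ.union Γ := by
  funext x
  rcases h x with h' | h' <;> simp only [union_apply, h'] <;> cases Γ x <;> cases Δ x <;>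
    simp_all

theorem disj.symm {Γ Δ : Ctx} (h : Γ.disj Δ) : Δ.disj Γ := fun x => (h x).symm

theorem disj_empty (Γ : Ctx) : Γ.disj Ctx.empty := fun _ => Or.inr rfl

theorem empty_disj (Γ : Ctx) : Ctx.empty.disj Γ := fun _ => Or.inl rfl

theorem disj_union {Γ Δ Ξ : Ctx} (h₁ : Γ.disj Δ) (h₂ : Γ.disj Ξ) : Γ.disj (Δ.union Ξ) := by
  intro x
  rcases h₁ x with h | h
  · exact Or.inl h
  · rcases h₂ x with h' | h'
    · exact Or.inl h'
    · simp [h, h']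

theorem single_disj {Γ : Ctx} {x : ℕ} (A : Ty) (h : Γ x = none) :
    (Ctx.single x A).disj Γ := by
  intro y
  by_cases hy : y = x
  · exact Or.inr (hy ▸ h)
  · simp [hy]

def ofVars (xs : List ℕ) (A : Ty) : Ctx := fun x => if x ∈ xs then some A else none

theorem ofVars_apply_of_not_mem {xs : List ℕ} {x : ℕ} (A : Ty) (h : x ∉ xs) :
    ofVars xs A x = none :=
  if_neg h

@[simp] theorem ofVars_nil (A : Ty) : ofVars [] A = Ctx.empty := rfl

theorem ofVars_cons (x : ℕ) (xs : List ℕ) (A : Ty) :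
    ofVars (x :: xs) A = (Ctx.single x A).union (ofVars xs A) := by
  funext y; by_cases hy : y = x <;> simp [ofVars, hy]

theorem ofVars_append (xs ys : List ℕ) (A : Ty) :
    ofVars (xs ++ ys) A = (ofVars xs A).union (ofVars ys A) := by
  funext x; by_cases hx : x ∈ xs <;> simp [ofVars, hx]

theorem ofVars_concat (xs : List ℕ) (x : ℕ) (A : Ty) :
    ofVars (xs ++ [x]) A = (ofVars xs A).union (Ctx.single x A) := by
  simp [ofVars_append, ofVars_cons]

theorem ofVars_disj {xs : List ℕ} {Γ : Ctx} (A : Ty) (h : ∀ x ∈ xs, Γ x = none) :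
    (ofVars xs A).disj Γ := by
  intro x
  by_cases hx : x ∈ xs
  · exact Or.inr (h x hx)
  · exact Or.inl (ofVars_apply_of_not_mem A hx)

end Ctx

/-! ## Tuples of variables followed by one last component -/

@[simp] theorem tupleV_singleton (v : Val) : tupleV [v] = v := rfl

@[simp] theorem tupleTy_singleton (A : Ty) : tupleTy [A] = A := rfl

@[simp] theorem patOfVars_singleton (x : ℕ) : patOfVars [x] = .pvar x := rfl

theorem tupleV_snoc_cons (x : ℕ) (xs : List ℕ) (w : Val) :
    tupleV ((x :: xs).map .var ++ [w]) = .pair (.var x) (tupleV (xs.map .var ++ [w])) := by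
  cases xs <;> rfl

theorem tupleTy_snoc_cons (A : Ty) (n : ℕ) (C : Ty) :
    tupleTy (List.replicate (n + 1) A ++ [C]) =
      .prod A (tupleTy (List.replicate n A ++ [C])) := by
  cases n <;> rfl

theorem patOfVars_snoc_cons (x : ℕ) (xs : List ℕ) (m : ℕ) :
    patOfVars (x :: (xs ++ [m])) = .ppair (.pvar x) (patOfVars (xs ++ [m])) := by
  cases xs <;> rfl

theorem tupleV_snoc_inj {xs ys : List ℕ} {c d : Val} (hlen : xs.length = ys.length)
    (h : tupleV (xs.map .var ++ [c]) = tupleV (ys.map .var ++ [d])) : xs = ys ∧ c = d := by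
  induction xs generalizing ys with
  | nil => cases ys with
    | nil => exact ⟨rfl, by simpa using h⟩
    | cons => simp at hlen
  | cons x xs ih => cases ys with
    | nil => simp at hlen
    | cons y ys =>
      rw [tupleV_snoc_cons, tupleV_snoc_cons, Val.pair.injEq, Val.var.injEq] at h
      obtain ⟨rfl, hxs, rfl⟩ := And.imp_right (ih (by simpa using hlen)) h
      exact ⟨by rw [hxs], rfl⟩

theorem tuple_tupleTy_snoc {C : Ty} (hC : ∀ B₁ B₂, C ≠ .prod B₁ B₂) (A : Ty) (n : ℕ) :
    (tupleTy (List.replicate n A ++ [C])).tuple = List.replicate n A ++ [C] := by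
  induction n with
  | zero => cases C <;> first | rfl | exact absurd rfl (hC _ _)
  | succ n ih => rw [tupleTy_snoc_cons, Ty.tuple, ih, List.replicate_succ, List.cons_append]

theorem tuple_tupleV_snoc {c : Val} (hc : ∀ a b, c ≠ .pair a b) (xs : List ℕ) :
    (tupleV (xs.map .var ++ [c])).tuple = xs.map .var ++ [c] := by
  induction xs with
  | nil => cases c <;> first | rfl | exact absurd rfl (hc _ _)
  | cons x xs ih => rw [tupleV_snoc_cons, Val.tuple, ih, List.map_cons, List.cons_append]

theorem tupleVars_tupleV_snoc (xs : List ℕ) (m : ℕ) :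
    (tupleV (xs.map .var ++ [.var m])).toTerm.tupleVars = some (xs ++ [m]) := by
  induction xs with
  | nil => rfl
  | cons x xs ih =>
    rw [tupleV_snoc_cons]
    change Term.tupleVars (.pair (.var x) _) = _
    rw [Term.tupleVars, ih]
    rfl

theorem TermTy.ofVal {Γ : Ctx} {v : Val} {A : Ty} (Ψ : IsoCtx) (h : VTy Γ v A) :
    TermTy Γ Ψ v.toTerm A := by
  induction h with
  | unit => exact TermTy.unit Ψ
  | var x A => exact TermTy.var x A Ψ
  | inl _ ih => exact TermTy.inl ih
  | inr _ ih => exact TermTy.inr ih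
  | fold _ ih => exact TermTy.fold ih
  | pair _ _ hd ih₁ ih₂ => exact TermTy.pair ih₁ ih₂ hd

theorem VTy.varTuple_snoc {xs : List ℕ} (hxs : xs.Nodup) (A : Ty) {Γ : Ctx} {w : Val} {C : Ty}
    (hw : VTy Γ w C) (hΓ : ∀ x ∈ xs, Γ x = none) :
    VTy ((Ctx.ofVars xs A).union Γ) (tupleV (xs.map .var ++ [w]))
      (tupleTy (List.replicate xs.length A ++ [C])) := by
  induction xs with
  | nil => simpa using hw
  | cons x xs ih =>
    obtain ⟨hx, hxs⟩ := List.nodup_cons.mp hxs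
    rw [tupleV_snoc_cons, List.length_cons, tupleTy_snoc_cons, Ctx.ofVars_cons,
      Ctx.union_assoc]
    refine VTy.pair (VTy.var x A) (ih hxs fun y hy => hΓ y (List.mem_cons_of_mem _ hy))
      (Ctx.disj_union ?_ ?_) <;> refine Ctx.single_disj _ ?_
    · exact Ctx.ofVars_apply_of_not_mem A hx
    · exact hΓ x List.mem_cons_self

theorem PatTy.varTuple_snoc {xs : List ℕ} {m : ℕ} (hxs : (xs ++ [m]).Nodup) (A C : Ty) :
    PatTy (patOfVars (xs ++ [m])) (tupleTy (List.replicate xs.length A ++ [C]))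
      ((Ctx.ofVars xs A).union (Ctx.single m C)) := by
  induction xs with
  | nil => simpa using PatTy.pvar m C
  | cons x xs ih =>
    obtain ⟨hx, hxs⟩ := List.nodup_cons.mp hxs
    rw [List.cons_append, patOfVars_snoc_cons, List.length_cons, tupleTy_snoc_cons,
      Ctx.ofVars_cons, Ctx.union_assoc]
    refine PatTy.ppair (PatTy.pvar x A) (ih hxs) (Ctx.disj_union ?_ ?_) <;>
      refine Ctx.single_disj _ ?_
    · exact Ctx.ofVars_apply_of_not_mem A (by simp_all)
    · simp_all

theorem VTy.varTuple {xs : List ℕ} (hxs : xs.Nodup) (A : Ty) :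
    VTy (Ctx.ofVars xs A) (tupleV (xs.map .var)) (tupleTy (List.replicate xs.length A)) := by
  rcases List.eq_nil_or_concat xs with rfl | ⟨ys, y, hxy⟩
  · exact VTy.unit
  · rw [List.concat_eq_append] at hxy
    subst hxy
    obtain ⟨hys, -, hy⟩ := List.nodup_append.mp hxs
    have h := VTy.varTuple_snoc hys A (VTy.var y A) fun x hx => by simpa using hy x hx y
    simpa [Ctx.ofVars_concat, List.replicate_succ'] using h

theorem PatTy.varTuple {xs : List ℕ} (hne : xs ≠ []) (hxs : xs.Nodup) (A : Ty) :
    PatTy (patOfVars xs) (tupleTy (List.replicate xs.length A)) (Ctx.ofVars xs A) := by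
  obtain ⟨ys, y, rfl⟩ : ∃ ys y, xs = ys ++ [y] := by
    simpa using (List.eq_nil_or_concat xs).resolve_left hne
  simpa [Ctx.ofVars_concat, List.replicate_succ'] using PatTy.varTuple_snoc hxs A A

theorem OD.cast {A : Ty} {S S' : Set Val} (h : S = S') (hS : OD A S) : OD A S' := h ▸ hS

def varTuples (L : List (List ℕ × Val)) : Set Val :=
  {v | ∃ p ∈ L, tupleV (p.1.map .var ++ [p.2]) = v}

section VarTuples

variable {n : ℕ} {L : List (List ℕ × Val)}

theorem proj2_varTuples (hlen : ∀ p ∈ L, p.1.length = n + 1) :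
    proj2 (varTuples L) = varTuples (L.map fun p => (p.1.tail, p.2)) := by
  ext w
  simp only [varTuples, List.mem_map, proj2, Set.mem_ofPred_eq]
  constructor
  · rintro ⟨u, p, hp, hu⟩
    obtain ⟨x, xs, hx⟩ := List.exists_cons_of_length_eq_add_one (hlen p hp)
    rw [hx, tupleV_snoc_cons, Val.pair.injEq] at hu
    exact ⟨_, ⟨p, hp, rfl⟩, by rw [hx]; exact hu.2⟩
  · rintro ⟨_, ⟨p, hp, rfl⟩, rfl⟩
    obtain ⟨x, xs, hx⟩ := List.exists_cons_of_length_eq_add_one (hlen p hp)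
    exact ⟨.var x, p, hp, by rw [hx, tupleV_snoc_cons]; rfl⟩

/-- Distinct last components make the first variable a function of the other components. -/
theorem sect2_varTuples (hlen : ∀ p ∈ L, p.1.length = n + 1) (hlast : (L.map Prod.snd).Nodup)
    {w : Val} (hw : w ∈ proj2 (varTuples L)) : ∃ y, sect2 (varTuples L) w = {.var y} := by
  obtain ⟨u, q, hq, hu⟩ := hw
  obtain ⟨y, ys, hy⟩ := List.exists_cons_of_length_eq_add_one (hlen q hq)
  rw [hy, tupleV_snoc_cons, Val.pair.injEq] at hu
  obtain ⟨rfl, rfl⟩ := hu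
  refine ⟨y, Set.ext fun v => ⟨?_, ?_⟩⟩
  · rintro ⟨p, hp, hv⟩
    obtain ⟨x, xs, hx⟩ := List.exists_cons_of_length_eq_add_one (hlen p hp)
    rw [hx, tupleV_snoc_cons, Val.pair.injEq] at hv
    have hlen' : xs.length = ys.length := by
      simpa [hx, hy] using (hlen p hp).trans (hlen q hq).symm
    have hpq := List.inj_on_of_nodup_map hlast hp hq (tupleV_snoc_inj hlen' hv.2).2
    rw [hpq, hy, List.cons.injEq] at hx
    rw [← hv.1, hx.1]
    rfl
  · rintro rfl
    exact ⟨q, hq, by rw [hy, tupleV_snoc_cons]⟩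

end VarTuples

theorem OD.varTuples_of_lasts (A C : Ty) (n : ℕ) {L : List (List ℕ × Val)}
    (hlen : ∀ p ∈ L, p.1.length = n) (hlast : (L.map Prod.snd).Nodup)
    (hC : OD C {w | w ∈ L.map Prod.snd}) :
    OD (tupleTy (List.replicate n A ++ [C])) (varTuples L) := by
  induction n generalizing L with
  | zero =>
    refine hC.cast (Set.ext fun w => ?_)
    simp only [List.mem_map, Set.mem_ofPred_eq]
    refine exists_congr fun p => and_congr_right fun hp => ?_
    rw [List.length_eq_zero_iff.mp (hlen p hp)]
    rfl
  | succ n ih =>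
    rw [tupleTy_snoc_cons]
    refine OD.prodR ?_ ?_ fun w hw => ?_
    · rintro u ⟨p, hp, rfl⟩
      obtain ⟨x, xs, hx⟩ := List.exists_cons_of_length_eq_add_one (hlen p hp)
      exact ⟨_, _, by rw [hx, tupleV_snoc_cons]⟩
    · rw [proj2_varTuples hlen]
      refine ih ?_ (by simpa [Function.comp_def] using hlast)
        (by simpa [Function.comp_def] using hC)
      simp only [List.mem_map]
      rintro _ ⟨p, hp, rfl⟩
      simp [hlen p hp]
    · obtain ⟨y, hy⟩ := sect2_varTuples hlen hlast hw
      exact hy ▸ OD.var A y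

theorem OD.varTuple {xs : List ℕ} (hne : xs ≠ []) (A : Ty) :
    OD (tupleTy (List.replicate xs.length A)) {tupleV (xs.map .var)} := by
  obtain ⟨ys, y, rfl⟩ : ∃ ys y, xs = ys ++ [y] := by
    simpa using (List.eq_nil_or_concat xs).resolve_left hne
  have h := OD.varTuples_of_lasts A A ys.length (L := [(ys, .var y)]) (by simp) (by simp)
    ((OD.var A y).cast (by simp))
  simpa [varTuples, List.replicate_succ'] using h

/-! ## Clause sets and recursive calls -/

@[simp] theorem Term.asVal_toTerm (v : Val) : v.toTerm.asVal = some v := by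
  induction v with
  | unit | var => rfl
  | inl _ ih | inr _ ih | fold _ ih => simp [Val.toTerm, Term.asVal, ih]
  | pair _ _ ih₁ ih₂ => simp [Val.toTerm, Term.asVal, ih₁, ih₂]

@[simp] theorem Term.valOf_toTerm (v : Val) : v.toTerm.valOf = some v := by
  cases v <;> exact Term.asVal_toTerm _

@[simp] theorem Term.valOf_lett (p : Pat) (a b : Term) :
    (Term.lett p a b).valOf = b.valOf := rfl

def Clauses.lhs (l : Clauses) : Set Val := {v | ∃ e, (v, e) ∈ l.toList}

def Clauses.rhs (l : Clauses) : Set Val := {w | ∃ c ∈ l.toList, c.2.valOf = some w}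

@[simp] theorem Clauses.lhs_nil : Clauses.nil.lhs = ∅ := by
  simp [Clauses.lhs, Clauses.toList]

@[simp] theorem Clauses.lhs_cons (v : Val) (e : Term) (r : Clauses) :
    (Clauses.cons v e r).lhs = insert v r.lhs := by
  ext u
  simp only [Clauses.lhs, Clauses.toList, List.mem_cons, Prod.mk.injEq, Set.mem_insert_iff,
    Set.mem_ofPred_eq]
  constructor
  · rintro ⟨e', ⟨rfl, -⟩ | h⟩
    exacts [Or.inl rfl, Or.inr ⟨e', h⟩]
  · rintro (rfl | ⟨e', h⟩)
    exacts [⟨e, Or.inl ⟨rfl, rfl⟩⟩, ⟨e', Or.inr h⟩]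

@[simp] theorem Clauses.rhs_nil : Clauses.nil.rhs = ∅ := by
  simp [Clauses.rhs, Clauses.toList]

@[simp] theorem Clauses.rhs_cons (v : Val) (e : Term) (r : Clauses) :
    (Clauses.cons v e r).rhs = {w | e.valOf = some w} ∪ r.rhs := by
  ext u; simp [Clauses.rhs, Clauses.toList]

def ClauseTy (Ψ : IsoCtx) (A B : Ty) (c : Val × Term) : Prop :=
  ∃ Γ, VTy Γ c.1 A ∧ TermTy Γ Ψ c.2 B

theorem ClauseTy.of_vty {Ψ : IsoCtx} {A B : Ty} {Γ : Ctx} {v w : Val} (hv : VTy Γ v A)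
    (hw : VTy Γ w B) : ClauseTy Ψ A B (v, w.toTerm) :=
  ⟨Γ, hv, TermTy.ofVal Ψ hw⟩

theorem IsoTy.of_clauseTy {Ψ : IsoCtx} {l : Clauses} {A B : Ty}
    (hty : l.toList.Forall (ClauseTy Ψ A B)) (hlhs : OD A l.lhs) (hrhs : OD B l.rhs) :
    IsoTy Ψ (.clauses l) A B := by
  choose Γ hv ht using List.forall_iff_forall_mem.mp hty
  classical
  refine IsoTy.clauses (fun c => if h : c ∈ l.toList then Γ c h else Ctx.empty)
    (fun c hc => ?_) (fun c hc => ?_) hlhs hrhs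
  · simpa [hc] using hv c hc
  · simpa [hc] using ht c hc

theorem TermTy.lett_consume {Γ Ξ : Ctx} {Ψ : IsoCtx} {p : Pat} {t₁ t₂ : Term} {A B : Ty}
    (h₁ : TermTy Γ Ψ t₁ A) (hp : PatTy p A Ξ) (h₂ : TermTy Ξ Ψ t₂ B) :
    TermTy Γ Ψ (.lett p t₁ t₂) B := by
  simpa using TermTy.lett (Δ := Ctx.empty) h₁ hp (by simpa using h₂) (Ctx.disj_empty Γ)
    (Ctx.empty_disj Ξ)

theorem RecCallC.exists_mem {f : ℕ} {p : Term} :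
    ∀ {l : Clauses}, RecCallC f p l → ∃ c ∈ l.toList, RecCallT f p c.2
  | .cons v e _, .head h => ⟨(v, e), List.mem_cons_self, h⟩
  | .cons _ _ _, .tail h =>
    let ⟨c, hc, hcall⟩ := RecCallC.exists_mem h
    ⟨c, List.mem_cons_of_mem _ hc, hcall⟩

mutual

theorem TermTy.not_recCallT {Γ : Ctx} {Ψ : IsoCtx} {t : Term} {A : Ty} {f : ℕ} {p : Term}
    (hΨ : ∀ e ∈ Ψ, e.1 ≠ f) : TermTy Γ Ψ t A → ¬ RecCallT f p t
  | .inl h, .inl hc | .inr h, .inr hc | .fold h, .fold hc => TermTy.not_recCallT hΨ h hc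
  | .pair h _ _, .pairL hc | .pair _ h _, .pairR hc => TermTy.not_recCallT hΨ h hc
  | .appV hω _, .here _ _ => by cases hω; exact hΨ _ rfl rfl
  | .appC hω _, .here _ _ => by cases hω
  | .appV hω _, .appIso hc => IsoTy.not_recCallI hΨ hω hc
  | .appC hω _, .appIso hc => IsoTy.not_recCallI (by simp) hω hc
  | .appV _ h, .appArg hc | .appC _ h, .appArg hc => TermTy.not_recCallT hΨ h hc
  | .lett h _ _ _ _, .lett₁ hc | .lett _ _ h _ _, .lett₂ hc => TermTy.not_recCallT hΨ h hc

theorem IsoTy.not_recCallI {Ψ : IsoCtx} {ω : Iso} {A B : Ty} {f : ℕ} {p : Term}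
    (hΨ : ∀ e ∈ Ψ, e.1 ≠ f) : IsoTy Ψ ω A B → ¬ RecCallI f p ω
  | .fixI _ h _, .fixI hc hne => IsoTy.not_recCallI (by simpa using hne) h hc
  | .clauses _ _ h _ _, .clauses hc =>
    let ⟨_, hmem, hcall⟩ := RecCallC.exists_mem hc
    TermTy.not_recCallT hΨ (h _ hmem) hcall

end

theorem Val.not_recCallT_toTerm (f : ℕ) (p : Term) (v : Val) : ¬ RecCallT f p v.toTerm := by
  induction v with
  | unit | var => rintro ⟨⟩
  | inl _ ih | inr _ ih | fold _ ih => rintro (_ | h | h | h); exact ih h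
  | pair _ _ ih₁ ih₂ => rintro (_ | _ | _ | _ | h | h); exacts [ih₁ h, ih₂ h]

/-! ## Integers -/

theorem VTy.nposOne : VTy Ctx.empty (.fold (.inl .unit)) nposTy := VTy.fold (VTy.inl VTy.unit)

theorem VTy.nposSucc {Γ : Ctx} {v : Val} (h : VTy Γ v nposTy) :
    VTy Γ (.fold (.inr v)) nposTy :=
  VTy.fold (VTy.inr h)

theorem VTy.zZero : VTy Ctx.empty (.inl .unit) ZTy := VTy.inl VTy.unit

theorem VTy.zPos {Γ : Ctx} {v : Val} (h : VTy Γ v nposTy) : VTy Γ (.inr (.inl v)) ZTy :=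
  VTy.inr (VTy.inl h)

theorem VTy.zNeg {Γ : Ctx} {v : Val} (h : VTy Γ v nposTy) : VTy Γ (.inr (.inr v)) ZTy :=
  VTy.inr (VTy.inr h)

theorem OD.npos_cases (x : ℕ) : OD nposTy {.fold (.inl .unit), .fold (.inr (.var x))} :=
  (OD.mu (A := .sum .one (.tvar 0)) (OD.sum OD.unit (OD.var nposTy x))).cast
    (by ext; simp; tauto)

theorem OD.Z_cases (x : ℕ) :
    OD ZTy {.inl .unit, .inr (.inl (.var x)), .inr (.inr (.var x))} :=
  (OD.sum OD.unit (OD.sum (OD.var nposTy x) (OD.var nposTy x))).cast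
    (by ext; simp; tauto)

def ZpowNpos (k : ℕ) : Ty := tupleTy (List.replicate k ZTy ++ [nposTy])

abbrev zCtx (s c : ℕ) : Ctx := Ctx.ofVars (List.range' s c) ZTy

theorem Zpow_succ (c : ℕ) : Zpow (c + 1) = tupleTy (List.replicate c ZTy ++ [ZTy]) := by
  rw [Zpow, List.replicate_succ']

theorem ZpowNpos_tuple_getElem (k : ℕ) : (ZpowNpos k).tuple[k]? = some nposTy := by
  rw [ZpowNpos, tuple_tupleTy_snoc (by simp [nposTy])]
  simp

theorem zCtx_apply {s c x : ℕ} (hx : x < s ∨ s + c ≤ x) : zCtx s c x = none :=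
  Ctx.ofVars_apply_of_not_mem _ (by rw [List.mem_range'_1]; omega)

theorem zCtx_disj {s a t b : ℕ} (h : s + a ≤ t ∨ t + b ≤ s) : (zCtx s a).disj (zCtx t b) :=
  Ctx.ofVars_disj _ fun x hx => zCtx_apply (by rw [List.mem_range'_1] at hx; omega)

theorem zCtx_disj_single {s c m : ℕ} (hm : m < s ∨ s + c ≤ m) (A : Ty) :
    (zCtx s c).disj (Ctx.single m A) :=
  (Ctx.single_disj A (zCtx_apply hm)).symm

theorem zCtx_add (s a b : ℕ) : zCtx s (a + b) = (zCtx s a).union (zCtx (s + a) b) := by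
  rw [zCtx, ← List.range'_append, Ctx.ofVars_append, Nat.one_mul]

theorem VTy.vt (s c : ℕ) : VTy (zCtx s c) (vt s c) (Zpow c) := by
  have h := VTy.varTuple List.nodup_range' ZTy (xs := List.range' s c)
  rwa [List.length_range'] at h

theorem PatTy.pt' (s : ℕ) {c : ℕ} (hc : c ≠ 0) : PatTy (pt' s c) (Zpow c) (zCtx s c) := by
  have h := PatTy.varTuple (by simpa using hc) List.nodup_range' ZTy (xs := List.range' s c)
  rwa [List.length_range'] at h

theorem OD.vt (s : ℕ) {c : ℕ} (hc : c ≠ 0) : OD (Zpow c) {vt s c} := by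
  have h := OD.varTuple (by simpa using hc) ZTy (xs := List.range' s c)
  rwa [List.length_range'] at h

theorem TermTy.app_vt {s c : ℕ} {Ψ : IsoCtx} {ω : Iso} {B : Ty}
    (hω : IsoTy none ω (Zpow c) B) : TermTy (zCtx s c) Ψ (.app ω (vt s c).toTerm) B :=
  TermTy.appC hω (TermTy.ofVal Ψ (VTy.vt s c))

theorem VTy.zTuple_snoc (s c : ℕ) {Γ : Ctx} {w : Val} {C : Ty} (hw : VTy Γ w C)
    (hΓ : ∀ x, s ≤ x → x < s + c → Γ x = none) :
    VTy ((zCtx s c).union Γ) (tupleV ((List.range' s c).map .var ++ [w]))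
      (tupleTy (List.replicate c ZTy ++ [C])) := by
  have h := VTy.varTuple_snoc List.nodup_range' ZTy hw fun x hx =>
    hΓ x (List.mem_range'_1.mp hx).1 (List.mem_range'_1.mp hx).2
  rwa [List.length_range'] at h

theorem VTy.zTuple_snoc_of_closed (s c : ℕ) {w : Val} {C : Ty} (hw : VTy Ctx.empty w C) :
    VTy (zCtx s c) (tupleV ((List.range' s c).map .var ++ [w]))
      (tupleTy (List.replicate c ZTy ++ [C])) := by
  simpa using VTy.zTuple_snoc s c hw fun _ _ _ => rfl

theorem PatTy.zTuple_snoc {s c m : ℕ} (hm : m < s ∨ s + c ≤ m) (C : Ty) :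
    PatTy (patOfVars (List.range' s c ++ [m])) (tupleTy (List.replicate c ZTy ++ [C]))
      ((zCtx s c).union (Ctx.single m C)) := by
  have h := PatTy.varTuple_snoc (xs := List.range' s c) (m := m)
    (List.nodup_append.mpr ⟨List.nodup_range', List.nodup_singleton m, fun x hx y hy => by
      rw [List.mem_range'_1] at hx; rw [List.mem_singleton] at hy; omega⟩) ZTy C
  rwa [List.length_range'] at h

theorem OD.zTuple_snoc (k : ℕ) {C : Ty} (L : List (ℕ × Val)) (hL : (L.map Prod.snd).Nodup)
    (hC : OD C {w | w ∈ L.map Prod.snd}) :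
    OD (tupleTy (List.replicate k ZTy ++ [C]))
      {v | ∃ p ∈ L, tupleV ((List.range' p.1 k).map .var ++ [p.2]) = v} := by
  refine (OD.varTuples_of_lasts ZTy C k (L := L.map fun p => (List.range' p.1 k, p.2))
    (by simp only [List.mem_map]; rintro _ ⟨p, -, rfl⟩; simp)
    (by simpa [Function.comp_def] using hL) (hC.cast (by simp [Function.comp_def]))).cast ?_
  ext; simp only [varTuples, List.mem_map, Prod.exists, Set.mem_ofPred_eq]; grind

theorem getElem?_tuple_tupleV_snoc {c : Val} (hc : ∀ a b, c ≠ .pair a b) (s k : ℕ) :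
    (tupleV ((List.range' s k).map .var ++ [c])).tuple[k]? = some c := by
  rw [tuple_tupleV_snoc hc]
  simp

/-! ## Typing of the translated isos -/

theorem isoTy_idIso : IsoTy none idIso (Zpow 1) (Zpow 1) := by
  refine IsoTy.of_clauseTy ⟨_, VTy.var 0 ZTy, TermTy.var 0 ZTy none⟩ ?_ ?_
  · exact (OD.var ZTy 0).cast (by simp)
  · exact (OD.var ZTy 0).cast (by simp [Term.valOf, Term.asVal])

theorem isoTy_swapIso : IsoTy none swapIso (Zpow 2) (Zpow 2) := by
  have h01 := VTy.varTuple (xs := [0, 1]) (by simp) ZTy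
  have h10 := VTy.varTuple (xs := [1, 0]) (by simp) ZTy
  rw [show Ctx.ofVars [1, 0] ZTy = Ctx.ofVars [0, 1] ZTy by
    funext; simp [Ctx.ofVars, or_comm]] at h10
  refine IsoTy.of_clauseTy (ClauseTy.of_vty h01 h10) ?_ ?_
  · exact (OD.varTuple (xs := [0, 1]) (by simp) ZTy).cast (by simp [tupleV])
  · exact (OD.varTuple (xs := [1, 0]) (by simp) ZTy).cast (by simp [tupleV])

theorem isoTy_signIso : IsoTy none signIso (Zpow 1) (Zpow 1) := by
  have hpos := VTy.zPos (VTy.var 0 nposTy)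
  have hneg := VTy.zNeg (VTy.var 0 nposTy)
  refine IsoTy.of_clauseTy ⟨ClauseTy.of_vty hpos hneg, ClauseTy.of_vty hneg hpos,
    ClauseTy.of_vty VTy.zZero VTy.zZero⟩ ?_ ?_ <;>
  exact (OD.Z_cases 0).cast (by ext; simp <;> tauto)

theorem OD.succ_lhs : OD ZTy {.inl .unit, .inr (.inl (.var 0)),
    .inr (.inr (.fold (.inl .unit))), .inr (.inr (.fold (.inr (.var 0))))} :=
  (OD.sum OD.unit (OD.sum (OD.var nposTy 0) (OD.npos_cases 0))).cast (by ext; simp; tauto)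

theorem OD.succ_rhs : OD ZTy {.inr (.inl (.fold (.inl .unit))),
    .inr (.inl (.fold (.inr (.var 0)))), .inl .unit, .inr (.inr (.var 0))} :=
  (OD.sum OD.unit (OD.sum (OD.npos_cases 0) (OD.var nposTy 0))).cast (by ext; simp; tauto)

theorem isoTy_succIso : IsoTy none succIso (Zpow 1) (Zpow 1) := by
  have hx := VTy.var 0 nposTy
  refine IsoTy.of_clauseTy ⟨ClauseTy.of_vty VTy.zZero (VTy.zPos VTy.nposOne),
    ClauseTy.of_vty (VTy.zPos hx) (VTy.zPos (VTy.nposSucc hx)),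
    ClauseTy.of_vty (VTy.zNeg VTy.nposOne) VTy.zZero,
    ClauseTy.of_vty (VTy.zNeg (VTy.nposSucc hx)) (VTy.zNeg hx)⟩ ?_ ?_
  · exact OD.succ_lhs.cast (by simp)
  · exact OD.succ_rhs.cast (by ext; simp; tauto)

def predIso : Iso := .clauses
  (.cons (.inr (.inl (.fold (.inl .unit)))) ((Val.inl .unit).toTerm)
  (.cons (.inr (.inl (.fold (.inr (.var 0))))) ((Val.inr (.inl (.var 0))).toTerm)
  (.cons (.inl .unit) ((Val.inr (.inr (.fold (.inl .unit)))).toTerm)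
  (.cons (.inr (.inr (.var 0))) ((Val.inr (.inr (.fold (.inr (.var 0))))).toTerm)
   .nil))))

theorem succIso_inv : succIso.inv = predIso := by
  simp [succIso, predIso, Iso.inv, Clauses.inv, invAux, Val.toTerm, Term.asVal]

theorem isoTy_succIso_inv : IsoTy none succIso.inv (Zpow 1) (Zpow 1) := by
  rw [succIso_inv]
  have hx := VTy.var 0 nposTy
  refine IsoTy.of_clauseTy ⟨ClauseTy.of_vty (VTy.zPos VTy.nposOne) VTy.zZero,
    ClauseTy.of_vty (VTy.zPos (VTy.nposSucc hx)) (VTy.zPos hx),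
    ClauseTy.of_vty VTy.zZero (VTy.zNeg VTy.nposOne),
    ClauseTy.of_vty (VTy.zNeg hx) (VTy.zNeg (VTy.nposSucc hx))⟩ ?_ ?_
  · exact OD.succ_rhs.cast (by ext; simp)
  · exact OD.succ_lhs.cast (by ext; simp; tauto)

theorem isoTy_compIso {n : ℕ} (hn : n ≠ 0) {wf wg : Iso}
    (hf : IsoTy none wf (Zpow n) (Zpow n)) (hg : IsoTy none wg (Zpow n) (Zpow n)) :
    IsoTy none (compIso n wf wg) (Zpow n) (Zpow n) := by
  refine IsoTy.of_clauseTy ⟨zCtx 0 n, VTy.vt 0 n, ?_⟩ ((OD.vt 0 hn).cast (by simp))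
    ((OD.vt (2 * n) hn).cast (by simp))
  refine TermTy.lett_consume (TermTy.app_vt hf) (PatTy.pt' n hn) ?_
  exact TermTy.lett_consume (TermTy.app_vt hg) (PatTy.pt' (2 * n) hn)
    (TermTy.ofVal _ (VTy.vt (2 * n) n))

theorem isoTy_parIso {j l : ℕ} (hj : j ≠ 0) (hl : l ≠ 0) {wf wg : Iso}
    (hf : IsoTy none wf (Zpow j) (Zpow j)) (hg : IsoTy none wg (Zpow l) (Zpow l)) :
    IsoTy none (parIso j l wf wg) (Zpow (j + l)) (Zpow (j + l)) := by
  have hout : (List.range' (j + l) j ++ List.range' (2 * j + l) l).Nodup :=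
    List.nodup_append.mpr ⟨List.nodup_range', List.nodup_range',
      fun x hx y hy => by simp only [List.mem_range'_1] at hx hy; omega⟩
  have hvt := VTy.varTuple hout ZTy
  have hod := OD.varTuple (by simp [hj]) ZTy
    (xs := List.range' (j + l) j ++ List.range' (2 * j + l) l)
  simp only [List.length_append, List.length_range'] at hvt hod
  refine IsoTy.of_clauseTy ⟨zCtx 0 (j + l), VTy.vt 0 (j + l), ?_⟩
    ((OD.vt 0 (by omega)).cast (by simp)) (hod.cast (by simp))
  rw [zCtx_add, Nat.zero_add]
  refine TermTy.lett (TermTy.app_vt hf) (PatTy.pt' (j + l) hj) ?_ (zCtx_disj (by omega))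
    (zCtx_disj (by omega))
  refine TermTy.lett (TermTy.app_vt hg) (PatTy.pt' (2 * j + l) hl) ?_ (zCtx_disj (by omega))
    (zCtx_disj (by omega))
  rw [← Ctx.ofVars_append]
  exact TermTy.ofVal _ hvt

theorem structRecClauses_auxIt {k : ℕ} {wf : Iso} (hf : IsoTy none wf (Zpow k) (Zpow k))
    {l : Clauses} (hl : auxIt k wf = .fixI 0 (.clauses l)) :
    StructRecClauses 0 l (ZpowNpos k) := by
  simp only [auxIt, Iso.fixI.injEq, Iso.clauses.injEq, true_and] at hl
  subst hl
  have happ : ∀ p, ¬ RecCallT 0 p (.app wf (vt 0 k).toTerm) := fun p =>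
    (TermTy.app_vt hf (s := 0) (Ψ := none)).not_recCallT (by simp)
  refine ⟨k, _, ZpowNpos_tuple_getElem k, ?_⟩
  simp only [Clauses.toList, List.forall_mem_cons, List.not_mem_nil, IsEmpty.forall_iff,
    implies_true, and_true]
  refine ⟨⟨_, getElem?_tuple_tupleV_snoc (by simp) 0 k, Or.inl ⟨rfl, fun p hp => ?_⟩⟩,
    ⟨_, getElem?_tuple_tupleV_snoc (by simp) 0 k, Or.inr fun p hp => ?_⟩⟩
  · cases hp with
    | lett₁ h => exact happ p h
    | lett₂ h => exact Val.not_recCallT_toTerm _ _ _ h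
  · obtain rfl : p = (tupleV ((List.range' (k + 1) k).map .var ++ [.var k])).toTerm := by
      cases hp with
      | lett₁ h => exact absurd h (happ p)
      | lett₂ h => cases h with
        | lett₁ h => cases h with
          | here => rfl
          | appIso h => cases h
          | appArg h => exact absurd h (Val.not_recCallT_toTerm _ _ _)
        | lett₂ h => exact absurd h (Val.not_recCallT_toTerm _ _ _)
    refine ⟨_, tupleVars_tupleV_snoc _ _, ?_, k, by simp, .fold (.inr (.refl _)), by simp⟩
    rw [ZpowNpos, tuple_tupleTy_snoc (by simp [nposTy])]
    simp

theorem isoTy_auxIt {k : ℕ} (hk : k ≠ 0) {wf : Iso} (hf : IsoTy none wf (Zpow k) (Zpow k)) :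
    IsoTy none (auxIt k wf) (ZpowNpos k) (ZpowNpos k) := by
  have harg : VTy ((Ctx.single k nposTy).union (zCtx (k + 1) k))
      (tupleV (((List.range' (k + 1) k).map Val.var) ++ [Val.var k])) (ZpowNpos k) := by
    rw [← Ctx.union_comm_of_disj (zCtx_disj_single (by omega) _)]
    exact VTy.zTuple_snoc _ _ (VTy.var k nposTy) (by intros; simp; omega)
  unfold auxIt
  refine IsoTy.fixI none (IsoTy.of_clauseTy
    ⟨⟨zCtx 0 k, VTy.zTuple_snoc_of_closed 0 k VTy.nposOne, ?_⟩,
      ⟨(zCtx 0 k).union (Ctx.single k nposTy), ?_, ?_⟩⟩ ?_ ?_)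
    fun l hl => structRecClauses_auxIt hf (congrArg (Iso.fixI 0) hl)
  · exact TermTy.lett_consume (TermTy.app_vt hf) (PatTy.pt' k hk)
      (TermTy.ofVal _ (VTy.zTuple_snoc_of_closed k k VTy.nposOne))
  · exact VTy.zTuple_snoc 0 k (VTy.nposSucc (VTy.var k nposTy)) (by intros; simp; omega)
  · refine TermTy.lett (TermTy.app_vt hf) (PatTy.pt' (k + 1) hk) ?_
      (zCtx_disj_single (by omega) _) (Ctx.single_disj _ (zCtx_apply (by omega)))
    refine TermTy.lett_consume
      (TermTy.appV (IsoTy.ivar 0 (ZpowNpos k) (ZpowNpos k)) (TermTy.ofVal _ harg))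
      (PatTy.zTuple_snoc (by omega) nposTy) ?_
    exact TermTy.ofVal _ (VTy.zTuple_snoc _ _ (VTy.nposSucc (VTy.var _ nposTy))
      (by intros; simp; omega))
  · exact (OD.zTuple_snoc k [(0, .fold (.inl .unit)), (0, .fold (.inr (.var k)))] (by simp)
      ((OD.npos_cases k).cast (by ext; simp))).cast (by ext; simp; tauto)
  · exact (OD.zTuple_snoc k
      [(k, .fold (.inl .unit)), (2 * k + 1, .fold (.inr (.var (3 * k + 1))))] (by simp)
      ((OD.npos_cases (3 * k + 1)).cast (by ext; simp))).cast (by ext; simp; tauto)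

theorem clauseTy_itIso_step {k : ℕ} (hk : k ≠ 0) {wf : Iso}
    (hf : IsoTy none wf (Zpow k) (Zpow k)) {c : Val → Val}
    (hc : ∀ {Γ v}, VTy Γ v nposTy → VTy Γ (c v) ZTy) :
    ClauseTy none (Zpow (k + 1)) (Zpow (k + 1))
      (tupleV ((List.range' 0 k).map .var ++ [c (.var k)]),
        .lett (patOfVars (List.range' (k + 1) k ++ [2 * k + 1]))
          (.app (auxIt k wf) (tupleV ((List.range' 0 k).map .var ++ [.var k])).toTerm)
          (tupleV ((List.range' (k + 1) k).map .var ++ [c (.var (2 * k + 1))])).toTerm) := by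
  rw [Zpow_succ]
  refine ⟨(zCtx 0 k).union (Ctx.single k nposTy),
    VTy.zTuple_snoc 0 k (hc (VTy.var k nposTy)) (by intros; simp; omega), ?_⟩
  refine TermTy.lett_consume (TermTy.appC (isoTy_auxIt hk hf)
    (TermTy.ofVal _ (VTy.zTuple_snoc 0 k (VTy.var k nposTy) (by intros; simp; omega))))
    (PatTy.zTuple_snoc (by omega) nposTy) ?_
  exact TermTy.ofVal _ (VTy.zTuple_snoc _ _ (hc (VTy.var _ nposTy)) (by intros; simp; omega))

theorem isoTy_itIso {k : ℕ} (hk : k ≠ 0) {wf : Iso} (hf : IsoTy none wf (Zpow k) (Zpow k)) :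
    IsoTy none (itIso k wf) (Zpow (k + 1)) (Zpow (k + 1)) := by
  have hzero := VTy.zTuple_snoc_of_closed 0 k VTy.zZero
  rw [← Zpow_succ] at hzero
  refine IsoTy.of_clauseTy ⟨ClauseTy.of_vty hzero hzero, clauseTy_itIso_step hk hf VTy.zPos,
    clauseTy_itIso_step hk hf VTy.zNeg⟩ ?_ ?_ <;> rw [Zpow_succ]
  · exact (OD.zTuple_snoc k
      [(0, .inl .unit), (0, .inr (.inl (.var k))), (0, .inr (.inr (.var k)))] (by simp)
      ((OD.Z_cases k).cast (by ext; simp))).cast (by ext; simp; tauto)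
  · exact (OD.zTuple_snoc k [(0, .inl .unit), (k + 1, .inr (.inl (.var (2 * k + 1)))),
      (k + 1, .inr (.inr (.var (2 * k + 1))))] (by simp)
      ((OD.Z_cases (2 * k + 1)).cast (by ext; simp))).cast (by ext; simp; tauto)

theorem clauseTy_ifIso_branch {k : ℕ} (hk : k ≠ 0) {w : Iso}
    (hw : IsoTy none w (Zpow k) (Zpow k)) {Γ : Ctx} {u : Val} (hu : VTy Γ u ZTy)
    (hΓ : ∀ x, x ≠ k → Γ x = none) :
    ClauseTy none (Zpow (k + 1)) (Zpow (k + 1))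
      (tupleV ((List.range' 0 k).map .var ++ [u]),
        .lett (pt' (k + 1) k) (.app w (vt 0 k).toTerm)
          (tupleV ((List.range' (k + 1) k).map .var ++ [u])).toTerm) := by
  rw [Zpow_succ]
  have hdisj : ∀ s, k < s ∨ s + k ≤ k → (zCtx s k).disj Γ := fun s hs =>
    Ctx.ofVars_disj _ fun x hx => hΓ x (by rw [List.mem_range'_1] at hx; omega)
  refine ⟨(zCtx 0 k).union Γ, VTy.zTuple_snoc 0 k hu fun x _ hx => hΓ x (by omega), ?_⟩
  refine TermTy.lett (TermTy.app_vt hw) (PatTy.pt' (k + 1) hk) ?_ (hdisj 0 (by omega))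
    (hdisj (k + 1) (by omega)).symm
  rw [← Ctx.union_comm_of_disj (hdisj (k + 1) (by omega))]
  exact TermTy.ofVal _ (VTy.zTuple_snoc _ _ hu fun x hx _ => hΓ x (by omega))

theorem isoTy_ifIso {k : ℕ} (hk : k ≠ 0) {wf wg wh : Iso}
    (hf : IsoTy none wf (Zpow k) (Zpow k)) (hg : IsoTy none wg (Zpow k) (Zpow k))
    (hh : IsoTy none wh (Zpow k) (Zpow k)) :
    IsoTy none (ifIso k wf wg wh) (Zpow (k + 1)) (Zpow (k + 1)) := by
  have hx : ∀ x, x ≠ k → Ctx.single k nposTy x = none := fun x hx => by simp [hx]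
  refine IsoTy.of_clauseTy
    ⟨clauseTy_ifIso_branch hk hf (VTy.zPos (VTy.var k nposTy)) hx,
      clauseTy_ifIso_branch hk hg VTy.zZero fun _ _ => rfl,
      clauseTy_ifIso_branch hk hh (VTy.zNeg (VTy.var k nposTy)) hx⟩ ?_ ?_ <;> rw [Zpow_succ]
  · exact (OD.zTuple_snoc k
      [(0, .inr (.inl (.var k))), (0, .inl .unit), (0, .inr (.inr (.var k)))] (by simp)
      ((OD.Z_cases k).cast (by ext; simp; tauto))).cast (by ext; simp; tauto)
  · exact (OD.zTuple_snoc k [(k + 1, .inr (.inl (.var k))), (k + 1, .inl .unit),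
      (k + 1, .inr (.inr (.var k)))] (by simp)
      ((OD.Z_cases k).cast (by ext; simp; tauto))).cast (by ext; simp; tauto)

theorem _root_.RPPx.RPP.arity_ne_zero {k : ℕ} (f : RPPx.RPP k) : k ≠ 0 := by
  induction f <;> omega

end LinRev

open LinRev in
/-- The RPP-to-iso encoding is well-typed: for every
`f ∈ RPP^k`, the translated iso `isos(f)` has type `Z^k ↔ Z^k`. -/
theorem rpp_encoding_well_typed (k : ℕ) (f : RPPx.RPP k) :
    IsoTy none (isosOf f) (Zpow k) (Zpow k) := by
  induction f with
  | id => exact isoTy_idIso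
  | suc => exact isoTy_succIso
  | pre => exact isoTy_succIso_inv
  | sign => exact isoTy_signIso
  | swap => exact isoTy_swapIso
  | comp f _ ihf ihg => exact isoTy_compIso f.arity_ne_zero ihf ihg
  | par f g ihf ihg => exact isoTy_parIso f.arity_ne_zero g.arity_ne_zero ihf ihg
  | it f ihf => exact isoTy_itIso f.arity_ne_zero ihf
  | ite f _ _ ihf ihg ihh => exact isoTy_ifIso f.arity_ne_zero ihf ihg ihh
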